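/- Let A be a Banach algebra with a right identity e, and let d : A → A be a Jordan right derivation. Then d vanishes on the right annihilator: d(r) = 0 for every r ∈ ran(A). -/

import Mathlib

/-! A Jordan right derivation kills every right identity `p`, because
`d p = d (p * p) = 2 • (d p * p) = 2 • d p`. If `r` lies in the right annihilator, then `e + r`
is again a right identity, so `d r = d (e + r) - d e = 0`. -/

theorem forall_mul_add_eq_self_of_forall_mul_eq_zero {A : Type*} [NonUnitalNonAssocSemiring A]
    {e r : A} (he : ∀ a : A, a * e = a) (hr : ∀ a : A, a * r = 0) :
    ∀ a : A, a * (e + r) = a := fun a => by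
  rw [mul_add, he, hr, add_zero]

theorem apply_eq_zero_of_forall_mul_eq_self {A : Type*} [NonUnitalNonAssocRing A]
    (d : A → A) (hd : ∀ a : A, d (a * a) = 2 • (d a * a)) {p : A} (hp : ∀ a : A, a * p = a) :
    d p = 0 := by
  have hdp := hd p
  rw [hp, hp, two_smul] at hdp
  exact left_eq_add.1 hdp

theorem jordanRightDerivation_vanishes_on_rightAnnihilator_general
    {A : Type*} [NonUnitalNormedRing A] [NormedSpace ℂ A]
    (e : A) (he : ∀ a : A, a * e = a)
    (d : A →ₗ[ℂ] A) (hd : ∀ a : A, d (a * a) = 2 • (d a * a)) :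
    ∀ r : A, (∀ a : A, a * r = 0) → d r = 0 := by
  intro r hr
  have hde : d e = 0 := apply_eq_zero_of_forall_mul_eq_self d hd he
  have hder : d (e + r) = 0 :=
    apply_eq_zero_of_forall_mul_eq_self d hd (forall_mul_add_eq_self_of_forall_mul_eq_zero he hr)
  rwa [map_add, hde, zero_add] at hder

/-- Let `A` be a complex Banach algebra with a right identity `e`, and let
`d : A → A` be a Jordan right derivation (`d (a²) = 2 • (d a * a)`).  Then `d` vanishes on
the right annihilator `ran(A) = {x | ∀ a, a * x = 0}`. -/
theorem jordanRightDerivation_vanishes_on_rightAnnihilator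
    {A : Type*} [NonUnitalNormedRing A] [NormedSpace ℂ A]
    [IsScalarTower ℂ A A] [SMulCommClass ℂ A A] [CompleteSpace A]
    (e : A) (he : ∀ a : A, a * e = a)
    (d : A →ₗ[ℂ] A) (hd : ∀ a : A, d (a * a) = 2 • (d a * a)) :
    ∀ r : A, (∀ a : A, a * r = 0) → d r = 0 :=
  jordanRightDerivation_vanishes_on_rightAnnihilator_general e he d hd
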